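/- The stability function of the central IELDTM of order K=2, R(z) = (1 + z/2 + z²/8)/(1 - z/2 + z²/8), satisfies |R(z)| ≤ 1 for all complex z with Re(z) ≤ 0. -/

import Mathlib

/-! Write the numerator and denominator as `a + b` and `a - b` with `a = 1 + z²/8` and `b = z/2`.
Then `|a + b|² - |a - b|² = 4 Re(a b̄) = Re z · (2 + |z|²/4)`, which is `≤ 0` on the closed left
half-plane. -/

open ComplexConjugate

namespace Complex

theorem normSq_add_sub_normSq_sub (a b : ℂ) :
    normSq (a + b) - normSq (a - b) = 4 * (a * conj b).re := by
  rw [normSq_add, normSq_sub]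
  ring

theorem norm_add_le_norm_sub_of_re_mul_conj_nonpos {a b : ℂ} (h : (a * conj b).re ≤ 0) :
    ‖a + b‖ ≤ ‖a - b‖ := by
  have hsq : normSq (a + b) ≤ normSq (a - b) := by
    linarith [normSq_add_sub_normSq_sub a b]
  rw [normSq_eq_norm_sq, normSq_eq_norm_sq] at hsq
  exact (sq_le_sq₀ (norm_nonneg _) (norm_nonneg _)).mp hsq

theorem re_one_add_mul_sq_mul_conj (c : ℝ) (z : ℂ) :
    ((1 + c * z ^ 2) * conj z).re = z.re * (1 + c * normSq z) := by
  have h : (1 + c * z ^ 2) * conj z = conj z + c * normSq z * z := by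
    rw [← mul_conj]
    ring
  rw [h]
  simp only [add_re, conj_re, mul_re, ofReal_re, ofReal_im, mul_im]
  ring

theorem norm_one_add_add_mul_sq_le {c : ℝ} (hc : 0 ≤ c) {z : ℂ} (hz : z.re ≤ 0) :
    ‖1 + z + c * z ^ 2‖ ≤ ‖1 - z + c * z ^ 2‖ := by
  have h := norm_add_le_norm_sub_of_re_mul_conj_nonpos (a := 1 + c * z ^ 2) (b := z) <| by
    rw [re_one_add_mul_sq_mul_conj]
    exact mul_nonpos_of_nonpos_of_nonneg hz <|
      add_nonneg zero_le_one (mul_nonneg hc (normSq_nonneg z))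
  convert h using 2 <;> ring

end Complex

theorem ieldtm_central_K2_A_stable (z : ℂ) (hz : z.re ≤ 0) :
    ‖(1 + z / 2 + z ^ 2 / 8) / (1 - z / 2 + z ^ 2 / 8)‖ ≤ 1 := by
  have hw : (z / 2).re ≤ 0 := by
    rw [Complex.div_ofNat_re]
    linarith
  have hnum : 1 + z / 2 + z ^ 2 / 8 = 1 + z / 2 + ((1 / 2 : ℝ) : ℂ) * (z / 2) ^ 2 := by
    push_cast
    ring
  have hden : 1 - z / 2 + z ^ 2 / 8 = 1 - z / 2 + ((1 / 2 : ℝ) : ℂ) * (z / 2) ^ 2 := by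
    push_cast
    ring
  rw [norm_div, hnum, hden]
  exact div_le_one_of_le₀ (Complex.norm_one_add_add_mul_sq_le (by norm_num) hw) (norm_nonneg _)
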